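/- arXiv:2012.06179 — 3 statements merged into one kernel-verified Lean document; each statement's English description precedes it below -/
import Mathlib

section
/- Let A and B be independent positive random variables with E[B] ≤ 1. Then E[min(AB, 1)] ≤ E[min(A, 1)]. -/
open MeasureTheory ProbabilityTheory

theorem stmt1 {Ω : Type*} [MeasureSpace Ω] [IsProbabilityMeasure (ℙ : Measure Ω)]
    (A B : Ω → ℝ) (hA : Measurable A) (hB : Measurable B)
    (hApos : ∀ᵐ ω, 0 < A ω) (hBpos : ∀ᵐ ω, 0 < B ω)
    (hAint : Integrable A) (hBint : Integrable B)
    (hindep : IndepFun A B)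
    (hEB : ∫ ω, B ω ≤ 1) :
    ∫ ω, min (A ω * B ω) 1 ≤ ∫ ω, min (A ω) 1 := by
  have hABm : Measurable fun ω => (A ω, B ω) := hA.prodMk hB
  set μA := (ℙ : Measure Ω).map A with hμA
  set μB := (ℙ : Measure Ω).map B with hμB
  have hmap : (ℙ : Measure Ω).map (fun ω => (A ω, B ω)) = μA.prod μB :=
    (indepFun_iff_map_prod_eq_prod_map_map hA.aemeasurable hB.aemeasurable).mp hindep
  haveI : IsProbabilityMeasure μA := Measure.isProbabilityMeasure_map hA.aemeasurable
  haveI : IsProbabilityMeasure μB := Measure.isProbabilityMeasure_map hB.aemeasurable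
  have hApos' : ∀ᵐ a ∂μA, 0 < a :=
    (ae_map_iff hA.aemeasurable measurableSet_Ioi).mpr hApos
  have hBpos' : ∀ᵐ b ∂μB, 0 < b :=
    (ae_map_iff hB.aemeasurable measurableSet_Ioi).mpr hBpos
  have hEB' : ∫ b, b ∂μB ≤ 1 := by
    rwa [hμB, integral_map hB.aemeasurable measurable_id'.aestronglyMeasurable]
  have hBint' : Integrable (fun b => b) μB := by
    rw [hμB, integrable_map_measure measurable_id'.aestronglyMeasurable hB.aemeasurable]
    exact hBint
  have hfmeas : Measurable fun p : ℝ × ℝ => min (p.1 * p.2) 1 :=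
    (measurable_fst.mul measurable_snd).min measurable_const
  have hposprod : ∀ᵐ p : ℝ × ℝ ∂(μA.prod μB), 0 < p.1 ∧ 0 < p.2 := by
    rw [← hmap]
    rw [ae_map_iff hABm.aemeasurable]
    · filter_upwards [hApos, hBpos] with ω h1 h2; exact ⟨h1, h2⟩
    · exact (measurableSet_Ioi.preimage measurable_fst).inter
        (measurableSet_Ioi.preimage measurable_snd)
  have hfint : Integrable (fun p : ℝ × ℝ => min (p.1 * p.2) 1) (μA.prod μB) := by
    refine Integrable.mono' (integrable_const 1) hfmeas.aestronglyMeasurable ?_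
    filter_upwards [hposprod] with p hp
    rw [Real.norm_eq_abs, abs_of_nonneg (le_min (mul_pos hp.1 hp.2).le zero_le_one)]
    exact min_le_right _ _
  have hminint : ∀ a : ℝ, 0 < a → Integrable (fun b => min (a * b) 1) μB := fun a ha => by
    refine Integrable.mono' (integrable_const 1) ?_ ?_
    · exact ((measurable_const.mul measurable_id).min measurable_const).aestronglyMeasurable
    · filter_upwards [hBpos'] with b hb
      rw [Real.norm_eq_abs, abs_of_nonneg (le_min (mul_nonneg ha.le hb.le) zero_le_one)]
      exact min_le_right _ _
  have key : ∀ᵐ a ∂μA, ∫ b, min (a * b) 1 ∂μB ≤ min a 1 := by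
    filter_upwards [hApos'] with a ha
    rcases le_or_gt a 1 with hle | hlt
    · rw [min_eq_left hle]
      calc ∫ b, min (a * b) 1 ∂μB ≤ ∫ b, a * b ∂μB := by
            refine integral_mono (hminint a ha) (hBint'.const_mul a) fun b => min_le_left _ _
        _ = a * ∫ b, b ∂μB := integral_const_mul a _
        _ ≤ a * 1 := by
            refine mul_le_mul_of_nonneg_left hEB' ha.le
        _ = a := mul_one a
    · rw [min_eq_right hlt.le]
      calc ∫ b, min (a * b) 1 ∂μB ≤ ∫ _, (1:ℝ) ∂μB :=
            integral_mono (hminint a ha) (integrable_const 1) fun b => min_le_right _ _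
        _ = 1 := by simp
  calc ∫ ω, min (A ω * B ω) 1
      = ∫ p : ℝ × ℝ, min (p.1 * p.2) 1 ∂(μA.prod μB) := by
        rw [← hmap, integral_map hABm.aemeasurable hfmeas.aestronglyMeasurable]
    _ = ∫ a, ∫ b, min (a * b) 1 ∂μB ∂μA := integral_prod _ hfint
    _ ≤ ∫ a, min a 1 ∂μA := by
        refine integral_mono_ae hfint.integral_prod_left ?_ key
        refine Integrable.mono' (integrable_const 1) ?_ ?_
        · exact (measurable_id'.min measurable_const).aestronglyMeasurable
        · filter_upwards [hApos'] with a ha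
          rw [Real.norm_eq_abs, abs_of_nonneg (le_min ha.le zero_le_one)]
          exact min_le_right _ _
    _ = ∫ ω, min (A ω) 1 := by
        rw [hμA, integral_map hA.aemeasurable
          ((measurable_id'.min measurable_const).aestronglyMeasurable)]
end

section
/- Let T = (V, E) be a finite tree and let w : E → ℝ with w_e > 0 for all e ∈ E. Define for i ≠ j the weight ρ_{ij} = ∑_{e ∈ path_T(i,j)} w_e. Then T is the unique minimum spanning tree for the weights ρ: for every spanning tree T' = (V, E') with E' ≠ E, ∑_{(i,j)∈E'} ρ_{ij} > ∑_{(i,j)∈E} ρ_{ij} = ∑_{e∈E} w_e. -/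
open SimpleGraph Finset
set_option linter.unusedSectionVars false

namespace Stmt7Aux

variable {V : Type*} [Fintype V] [DecidableEq V] {T : SimpleGraph V}

noncomputable def pathT (hT : T.IsTree) (i j : V) : T.Walk i j :=
  (hT.existsUnique_path i j).choose

lemma pathT_isPath (hT : T.IsTree) (i j : V) : (pathT hT i j).IsPath :=
  (hT.existsUnique_path i j).choose_spec.1

lemma pathT_unique (hT : T.IsTree) {i j : V} (p : T.Walk i j) (hp : p.IsPath) :
    p = pathT hT i j :=
  (hT.existsUnique_path i j).choose_spec.2 p hp

lemma pathT_symm_edges (hT : T.IsTree) (i j : V) :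
    (pathT hT i j).edges.toFinset = (pathT hT j i).edges.toFinset := by
  have h := pathT_unique hT (pathT hT i j).reverse ((pathT_isPath hT i j).reverse)
  rw [← h]
  ext f
  simp [SimpleGraph.Walk.edges_reverse]

open scoped Classical in
noncomputable def g (hT : T.IsTree) (e : Sym2 V) : Finset (Sym2 V) :=
  Finset.univ.filter (fun f => ∃ i j : V, e = s(i, j) ∧ f ∈ (pathT hT i j).edges)

lemma g_subset' (hT : T.IsTree) (e : Sym2 V) : ∀ f ∈ g hT e, f ∈ T.edgeSet := by
  classical
  intro f hf
  simp only [g, Finset.mem_filter] at hf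
  obtain ⟨-, i, j, -, hf⟩ := hf
  exact (pathT hT i j).edges_subset_edgeSet hf

lemma hg (hT : T.IsTree) (i j : V) : g hT s(i, j) = (pathT hT i j).edges.toFinset := by
  classical
  ext f
  simp only [g, Finset.mem_filter, List.mem_toFinset, Finset.mem_univ, true_and]
  constructor
  · rintro ⟨a, b, hs, hf⟩
    rcases Sym2.eq_iff.mp hs with ⟨rfl, rfl⟩ | ⟨rfl, rfl⟩
    · exact hf
    · rw [← List.mem_toFinset, pathT_symm_edges hT i j, List.mem_toFinset]
      exact hf
  · intro hf
    exact ⟨i, j, rfl, hf⟩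

lemma cover (hT : T.IsTree) {x y : V} (W : T.Walk x y) :
    (pathT hT x y).edges ⊆ W.edges := by
  intro f hf
  have h := pathT_unique hT (W.toPath : T.Walk x y) W.toPath.isPath
  rw [← h] at hf
  exact Walk.edges_toPath_subset W hf

lemma key (hT : T.IsTree) {T' : SimpleGraph V} {x y : V} (p' : T'.Walk x y)
    (f : Sym2 V) (hf : f ∈ (pathT hT x y).edges) :
    ∃ e' ∈ p'.edges, f ∈ g hT e' := by
  induction p' with
  | @nil u =>
    exfalso
    have h := pathT_unique hT (Walk.nil : T.Walk u u) Walk.IsPath.nil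
    rw [← h] at hf
    simp at hf
  | @cons a b c h q ih =>
    have hsub := cover hT ((pathT hT a b).append (pathT hT b c))
    have hf' := hsub hf
    rw [Walk.edges_append, List.mem_append] at hf'
    rcases hf' with h1 | h2
    · refine ⟨s(a, b), ?_, ?_⟩
      · simp
      · rw [hg hT a b, List.mem_toFinset]; exact h1
    · obtain ⟨e', he', hfe⟩ := ih h2
      exact ⟨e', by simp [he'], hfe⟩

end Stmt7Aux

open Stmt7Aux in
theorem stmt7 {V : Type*} [Fintype V] [DecidableEq V]
    (T : SimpleGraph V) (hT : T.IsTree)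
    (w : Sym2 V → ℝ) (hw : ∀ e ∈ T.edgeSet, 0 < w e)
    (ρ : Sym2 V → ℝ)
    (hρ : ∀ i j : V, ∀ p : T.Walk i j, p.IsPath →
      ρ s(i, j) = ∑ e ∈ p.edges.toFinset, w e) :
    ∀ T' : SimpleGraph V, T'.IsTree → T' ≠ T →
      (∑ᶠ e ∈ T'.edgeSet, ρ e) > ∑ᶠ e ∈ T.edgeSet, w e := by
  classical
  intro T' hT' hne
  set E : Finset (Sym2 V) := T.edgeFinset with hE
  set E' : Finset (Sym2 V) := T'.edgeFinset with hE'
  have hfin1 : (∑ᶠ e ∈ T'.edgeSet, ρ e) = ∑ e ∈ E', ρ e := by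
    rw [← coe_edgeFinset, finsum_mem_coe_finset]
  have hfin2 : (∑ᶠ e ∈ T.edgeSet, w e) = ∑ e ∈ E, w e := by
    rw [← coe_edgeFinset, finsum_mem_coe_finset]
  rw [hfin1, hfin2]
  have g_subset : ∀ e : Sym2 V, g hT e ⊆ E := fun e f hf =>
    mem_edgeFinset.mpr (g_subset' hT e f hf)
  set N : Sym2 V → ℕ := fun f => (E'.filter (fun e' => f ∈ g hT e')).card with hN
  -- step 1: ρ on each edge is sum of w over g
  have step1 : ∑ e ∈ E', ρ e = ∑ e ∈ E', ∑ f ∈ g hT e, w f := by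
    refine Finset.sum_congr rfl fun e he => ?_
    induction e using Sym2.ind with
    | _ i j => rw [hg hT i j]; exact hρ i j (pathT hT i j) (pathT_isPath hT i j)
  -- step 2: double counting (real)
  have inner : ∀ e : Sym2 V, ∑ f ∈ g hT e, w f = ∑ f ∈ E, if f ∈ g hT e then w f else 0 := by
    intro e
    rw [Finset.sum_ite_mem, Finset.inter_eq_right.mpr (g_subset e)]
  have step2 : ∑ e ∈ E', ∑ f ∈ g hT e, w f = ∑ f ∈ E, (N f : ℝ) * w f := by
    simp_rw [inner]
    rw [Finset.sum_comm]
    refine Finset.sum_congr rfl fun f hf => ?_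
    rw [← Finset.sum_filter, Finset.sum_const, nsmul_eq_mul]
  -- step 3: N f ≥ 1 for f in E
  have step3 : ∀ f ∈ E, 1 ≤ N f := by
    intro f hf
    induction f using Sym2.ind with
    | _ a b =>
      have hadj : T.Adj a b := mem_edgeFinset.mp hf
      have hpath : (Walk.cons hadj Walk.nil : T.Walk a b) = pathT hT a b :=
        pathT_unique hT _ (by simp [hadj.ne])
      have hmem : s(a, b) ∈ (pathT hT a b).edges := by
        rw [← hpath]; simp
      obtain ⟨p'⟩ := hT'.isConnected.preconnected a b
      obtain ⟨e', he', hfe⟩ := key hT p' s(a, b) hmem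
      have he'E : e' ∈ E' := mem_edgeFinset.mpr (p'.edges_subset_edgeSet he')
      rw [hN]
      exact Finset.card_pos.mpr ⟨e', Finset.mem_filter.mpr ⟨he'E, hfe⟩⟩
  -- each g e' for e' ∈ E' has card ≥ 1
  have gcard1 : ∀ e' ∈ E', 1 ≤ (g hT e').card := by
    intro e' he'
    induction e' using Sym2.ind with
    | _ i j =>
      have hadj : T'.Adj i j := mem_edgeFinset.mp he'
      rw [hg hT i j]
      rcases List.eq_nil_or_concat (pathT hT i j).edges with hnil | ⟨l, a, hl⟩
      · exfalso
        have : (pathT hT i j).length = 0 := by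
          have := (pathT hT i j).length_edges
          rw [hnil] at this; simpa using this.symm
        exact hadj.ne (Walk.eq_of_length_eq_zero this)
      · refine Finset.card_pos.mpr ⟨a, ?_⟩
        rw [List.mem_toFinset, hl]
        simp
  -- E' ≠ E and equal cards give an edge of T' not in T
  have hcards : E'.card = E.card := by
    have h1 := hT.card_edgeFinset
    have h2 := hT'.card_edgeFinset
    rw [hE', hE]
    omega
  have hEne : E' ≠ E := by
    intro h
    apply hne
    apply SimpleGraph.edgeSet_injective
    rw [← coe_edgeFinset, ← coe_edgeFinset, ← hE', ← hE, h]
  obtain ⟨e0, he0E', he0E⟩ : ∃ e0 ∈ E', e0 ∉ E := by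
    by_contra hc
    push_neg at hc
    exact hEne (Finset.eq_of_subset_of_card_le hc (le_of_eq hcards.symm))
  -- g e0 has card ≥ 2
  have gcard2 : 2 ≤ (g hT e0).card := by
    induction e0 using Sym2.ind with
    | _ i j =>
      have hadj : T'.Adj i j := mem_edgeFinset.mp he0E'
      rw [hg hT i j]
      have hnodup : (pathT hT i j).edges.Nodup := (pathT_isPath hT i j).isTrail.edges_nodup
      rw [List.toFinset_card_of_nodup hnodup, (pathT hT i j).length_edges]
      by_contra hlt
      push_neg at hlt
      interval_cases h : (pathT hT i j).length
      · exact hadj.ne (Walk.eq_of_length_eq_zero h)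
      · exact he0E (mem_edgeFinset.mpr ((T.mem_edgeSet).mpr ((pathT hT i j).adj_of_length_eq_one h)))
  -- nat double count: some f0 with N f0 ≥ 2
  have natcount : ∑ f ∈ E, N f = ∑ e ∈ E', (g hT e).card := by
    have : ∀ e : Sym2 V, (g hT e).card = ∑ f ∈ E, if f ∈ g hT e then 1 else 0 := by
      intro e
      rw [Finset.sum_ite_mem, Finset.inter_eq_right.mpr (g_subset e), Finset.sum_const,
        smul_eq_mul, mul_one]
    simp_rw [this, hN]
    rw [Finset.sum_comm]
    refine Finset.sum_congr rfl fun f hf => ?_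
    rw [← Finset.sum_filter, Finset.sum_const, smul_eq_mul, mul_one]
  obtain ⟨f0, hf0E, hf02⟩ : ∃ f0 ∈ E, 2 ≤ N f0 := by
    by_contra hc
    push_neg at hc
    have hle : ∑ f ∈ E, N f ≤ E.card := by
      calc ∑ f ∈ E, N f ≤ ∑ _f ∈ E, 1 := Finset.sum_le_sum (fun f hf => by
              have := hc f hf; omega)
        _ = E.card := by simp
    have hgt : E'.card < ∑ e ∈ E', (g hT e).card := by
      have := Finset.sum_lt_sum (f := fun _ => 1) (g := fun e => (g hT e).card)
        (fun e he => gcard1 e he) ⟨e0, he0E', gcard2⟩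
      simpa using this
    rw [natcount] at hle
    omega
  -- final comparison
  rw [step1, step2]
  refine Finset.sum_lt_sum (fun f hf => ?_) ⟨f0, hf0E, ?_⟩
  · have hwf := hw f (mem_edgeFinset.mp hf)
    have h1 := step3 f hf
    have h1' : (1 : ℝ) ≤ (N f : ℝ) := by exact_mod_cast h1
    nlinarith
  · have hwf := hw f0 (mem_edgeFinset.mp hf0E)
    have h2 : (2 : ℝ) ≤ (N f0 : ℝ) := by exact_mod_cast hf02
    nlinarith
end

section
/- Let T = (V,E) and T' = (V,E') be two spanning trees on the same finite vertex set V. Then there exists a bijection τ : E → E' such that for every edge e = {i,j} ∈ E, the edge τ(e) = {h,l} ∈ E' satisfies e ∈ path_T(h,l), i.e., e lies on the unique path in T between the endpoints of τ(e). -/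
/-!
Hall's marriage theorem, applied to the relation "`e` lies on the `T`-path of `e'`". Let `S` be a
set of edges of `T`. The edges of `T'` whose `T`-path avoids `S` join vertices that are connected
in the forest `T \ S`, so they form a forest whose components are finer than those of `T \ S`.
A forest with `c` components on `n` vertices has `n - c` edges, hence there are at most
`|E(T \ S)| = |E(T)| - |S|` such edges, and at least `|S|` edges of `T'` have a `T`-path meeting
`S`. The injection given by Hall's theorem is a bijection since both trees have `|V| - 1` edges.
-/

namespace SimpleGraph

variable {V : Type*} {G H T T' : SimpleGraph V}

lemma Reachable.deleteEdges_singleton_or {a b x y : V} (hxy : G.Reachable x y) :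
    (G.deleteEdges {s(a, b)}).Reachable x y ∨
      ((G.deleteEdges {s(a, b)}).Reachable x a ∧ (G.deleteEdges {s(a, b)}).Reachable b y) ∨
      ((G.deleteEdges {s(a, b)}).Reachable x b ∧ (G.deleteEdges {s(a, b)}).Reachable a y) := by
  obtain ⟨w⟩ := hxy
  induction w with
  | nil => exact .inl .rfl
  | @cons x z _ hxz _ ih =>
    by_cases he : s(x, z) = s(a, b)
    · rcases Sym2.eq_iff.mp he with ⟨rfl, rfl⟩ | ⟨rfl, rfl⟩ <;>
        rcases ih with h | ⟨h₁, h₂⟩ | ⟨h₁, h₂⟩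
      · exact .inr (.inl ⟨.rfl, h⟩)
      · exact .inl (h₁.symm.trans h₂)
      · exact .inl h₂
      · exact .inr (.inr ⟨.rfl, h⟩)
      · exact .inl h₂
      · exact .inl (h₁.symm.trans h₂)
    · have hxz' : (G.deleteEdges {s(a, b)}).Reachable x z :=
        (deleteEdges_adj.mpr ⟨hxz, he⟩).reachable
      rcases ih with h | ⟨h₁, h₂⟩ | ⟨h₁, h₂⟩
      · exact .inl (hxz'.trans h)
      · exact .inr (.inl ⟨hxz'.trans h₁, h₂⟩)
      · exact .inr (.inr ⟨hxz'.trans h₁, h₂⟩)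

lemma card_connectedComponent_deleteEdges_of_isBridge [Finite V] {a b : V} (hab : G.Adj a b)
    (hbr : G.IsBridge s(a, b)) :
    Nat.card (G.deleteEdges {s(a, b)}).ConnectedComponent = Nat.card G.ConnectedComponent + 1 := by
  set G' := G.deleteEdges {s(a, b)}
  let φ := ConnectedComponent.map (Hom.ofLE (G.deleteEdges_le {s(a, b)}))
  -- `φ` merges exactly the components of `a` and `b`, so it is bijective once `b`'s is removed
  let ψ : ({G'.connectedComponentMk b}ᶜ : Set G'.ConnectedComponent) → G.ConnectedComponent :=
    fun c => φ c
  have hψ : ψ.Bijective := by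
    constructor
    · rintro ⟨c, hc⟩ ⟨d, hd⟩ hcd
      induction c using ConnectedComponent.ind with | h x => ?_
      induction d using ConnectedComponent.ind with | h y => ?_
      have hxy : G.Reachable x y := ConnectedComponent.exact hcd
      rcases hxy.deleteEdges_singleton_or (a := a) (b := b) with h | ⟨-, h⟩ | ⟨h, -⟩
      · exact Subtype.ext (ConnectedComponent.sound h)
      · exact (hd (ConnectedComponent.sound h.symm)).elim
      · exact (hc (ConnectedComponent.sound h)).elim
    · intro c
      induction c using ConnectedComponent.ind with | h y => ?_
      by_cases hy : G'.connectedComponentMk y = G'.connectedComponentMk b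
      · refine ⟨⟨G'.connectedComponentMk a, fun h => hbr (ConnectedComponent.exact h)⟩, ?_⟩
        have : G.Reachable b y := ConnectedComponent.exact (congrArg φ hy).symm
        exact ConnectedComponent.sound (hab.reachable.trans this)
      · exact ⟨⟨_, hy⟩, rfl⟩
  rw [← Nat.card_eq_of_bijective ψ hψ, Nat.card_coe_set_eq,
    ← Set.ncard_add_ncard_compl {G'.connectedComponentMk b}, Set.ncard_singleton, add_comm]

lemma card_connectedComponent_bot :
    Nat.card (⊥ : SimpleGraph V).ConnectedComponent = Nat.card V :=
  (Nat.card_eq_of_bijective _ ⟨fun _ _ h => reachable_bot.mp (ConnectedComponent.exact h),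
    Quot.mk_surjective⟩).symm

lemma IsAcyclic.card_connectedComponent_add_ncard_edgeSet [Finite V] (hG : G.IsAcyclic) :
    Nat.card G.ConnectedComponent + G.edgeSet.ncard = Nat.card V := by
  induction hn : G.edgeSet.ncard generalizing G with
  | zero =>
    obtain rfl : G = ⊥ := edgeSet_eq_empty.mp ((Set.ncard_eq_zero).mp hn)
    exact card_connectedComponent_bot
  | succ n ih =>
    obtain ⟨e, he⟩ : G.edgeSet.Nonempty := Set.nonempty_of_ncard_ne_zero (by omega)
    induction e using Sym2.ind with | h a b => ?_
    have hn' : (G.deleteEdges {s(a, b)}).edgeSet.ncard = n := by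
      rw [edgeSet_deleteEdges, Set.ncard_sdiff_singleton_of_mem he, hn, Nat.add_sub_cancel]
    have := ih (hG.anti (G.deleteEdges_le _)) hn'
    rw [card_connectedComponent_deleteEdges_of_isBridge he
      (isAcyclic_iff_forall_adj_isBridge.mp hG he)] at this
    omega

lemma card_connectedComponent_le_of_adj_reachable [Finite V]
    (h : ∀ x y, H.Adj x y → G.Reachable x y) :
    Nat.card G.ConnectedComponent ≤ Nat.card H.ConnectedComponent := by
  have hHG : ∀ x y, H.Reachable x y → G.Reachable x y := by
    simp only [reachable_iff_reflTransGen] at h ⊢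
    exact Relation.reflTransGen_closed fun x y hxy => h x y hxy
  refine Nat.card_le_card_of_surjective
    (ConnectedComponent.lift G.connectedComponentMk fun x y p _ =>
      ConnectedComponent.sound (hHG x y p.reachable)) ?_
  intro c
  induction c using ConnectedComponent.ind with | h x => exact ⟨H.connectedComponentMk x, rfl⟩

lemma IsAcyclic.ncard_edgeSet_le_of_adj_reachable [Finite V] (hG : G.IsAcyclic)
    (hH : H.IsAcyclic) (h : ∀ x y, H.Adj x y → G.Reachable x y) :
    H.edgeSet.ncard ≤ G.edgeSet.ncard := by
  have := hG.card_connectedComponent_add_ncard_edgeSet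
  have := hH.card_connectedComponent_add_ncard_edgeSet
  have := card_connectedComponent_le_of_adj_reachable h
  omega

lemma IsTree.ncard_edgeSet_add_one [Finite V] (hG : G.IsTree) :
    G.edgeSet.ncard + 1 = Nat.card V := by
  have := hG.connected.preconnected.subsingleton_connectedComponent
  have := hG.connected.nonempty.map G.connectedComponentMk
  rw [← hG.isAcyclic.card_connectedComponent_add_ncard_edgeSet, Nat.card_unique, add_comm]

lemma IsAcyclic.reachable_deleteEdges_iff (hG : G.IsAcyclic) {u v : V} {p : G.Walk u v}
    (hp : p.IsPath) (S : Set (Sym2 V)) :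
    (G.deleteEdges S).Reachable u v ↔ ∀ e ∈ p.edges, e ∉ S := by
  refine ⟨fun hr e he heS => ?_, fun h => ⟨p.toDeleteEdges S h⟩⟩
  obtain ⟨q, hq⟩ := hr.exists_isPath
  have hqp : q.mapLe (G.deleteEdges_le S) = p :=
    congrArg Subtype.val ((hG.subsingleton_path u v).elim ⟨_, hq.mapLe _⟩ ⟨p, hp⟩)
  rw [← hqp, Walk.edges_mapLe_eq_edges] at he
  have he' := q.edges_subset_edgeSet he
  rw [edgeSet_deleteEdges] at he'
  exact he'.2 heS

def LiesOnPath (T : SimpleGraph V) (e e' : Sym2 V) : Prop :=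
  ∀ h l, e' = s(h, l) → ∀ p : T.Walk h l, p.IsPath → e ∈ p.edges

lemma IsAcyclic.liesOnPath_iff (hT : T.IsAcyclic) {h l : V} {p : T.Walk h l} (hp : p.IsPath)
    (e : Sym2 V) : T.LiesOnPath e s(h, l) ↔ e ∈ p.edges := by
  refine ⟨fun he => he h l rfl p hp, fun he h' l' hs q hq => ?_⟩
  rcases Sym2.eq_iff.mp hs.symm with ⟨rfl, rfl⟩ | ⟨rfl, rfl⟩
  · obtain rfl : p = q :=
      congrArg Subtype.val ((hT.subsingleton_path _ _).elim ⟨p, hp⟩ ⟨q, hq⟩)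
    exact he
  · obtain rfl : p = q.reverse :=
      congrArg Subtype.val ((hT.subsingleton_path _ _).elim ⟨p, hp⟩ ⟨q.reverse, hq.reverse⟩)
    rwa [Walk.edges_reverse, List.mem_reverse] at he

lemma IsTree.reachable_deleteEdges_iff (hT : T.IsTree) (S : Set (Sym2 V)) (h l : V) :
    (T.deleteEdges S).Reachable h l ↔ ∀ e ∈ S, ¬ T.LiesOnPath e s(h, l) := by
  obtain ⟨p, hp⟩ := hT.connected.exists_isPath h l
  simp only [hT.isAcyclic.reachable_deleteEdges_iff hp, hT.isAcyclic.liesOnPath_iff hp]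
  exact ⟨fun h e heS hep => h e hep heS, fun h e hep heS => h e heS hep⟩

lemma IsTree.ncard_le_ncard_liesOnPath [Finite V] (hT : T.IsTree)
    (hT' : T'.IsTree) {S : Set (Sym2 V)} (hS : S ⊆ T.edgeSet) :
    S.ncard ≤ {e' ∈ T'.edgeSet | ∃ e ∈ S, T.LiesOnPath e e'}.ncard := by
  set N := {e' ∈ T'.edgeSet | ∃ e ∈ S, T.LiesOnPath e e'}
  have hN : N ⊆ T'.edgeSet := Set.sep_subset _ _
  have hle : (T'.deleteEdges N).edgeSet.ncard ≤ (T.deleteEdges S).edgeSet.ncard := by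
    refine (hT.isAcyclic.anti (T.deleteEdges_le S)).ncard_edgeSet_le_of_adj_reachable
      (hT'.isAcyclic.anti (T'.deleteEdges_le N)) fun x y hxy => ?_
    obtain ⟨hxy, hxyN⟩ := deleteEdges_adj.mp hxy
    exact (hT.reachable_deleteEdges_iff S x y).mpr fun e he hl => hxyN ⟨hxy, e, he, hl⟩
  clear_value N
  rw [edgeSet_deleteEdges, edgeSet_deleteEdges, Set.ncard_sdiff hN,
    Set.ncard_sdiff hS] at hle
  have := hT.ncard_edgeSet_add_one
  have := hT'.ncard_edgeSet_add_one
  have := Set.ncard_le_ncard hS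
  have := Set.ncard_le_ncard hN
  omega

lemma IsTree.exists_injective_liesOnPath [Finite V] (hT : T.IsTree)
    (hT' : T'.IsTree) :
    ∃ f : T.edgeSet → T'.edgeSet, f.Injective ∧ ∀ e : T.edgeSet, T.LiesOnPath e (f e) := by
  classical
  have := Fintype.ofFinite T'.edgeSet
  refine (Fintype.all_card_le_filter_rel_iff_exists_injective
    fun (e : T.edgeSet) (e' : T'.edgeSet) => T.LiesOnPath e e').mp fun A => ?_
  have hS : Subtype.val '' (A : Set T.edgeSet) ⊆ T.edgeSet := by
    rintro _ ⟨e, -, rfl⟩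
    exact e.2
  convert hT.ncard_le_ncard_liesOnPath hT' hS using 1
  · rw [Set.ncard_image_of_injective _ Subtype.val_injective, Set.ncard_coe_finset]
  · rw [← Set.ncard_coe_finset, ← Set.ncard_image_of_injective _ Subtype.val_injective]
    congr 1
    ext e'
    simp only [Set.mem_image, Finset.coe_filter, Finset.mem_univ, true_and, Set.mem_ofPred_eq,
      Finset.mem_coe]
    constructor
    · rintro ⟨⟨e', he'⟩, ⟨e, he, hl⟩, rfl⟩
      exact ⟨he', e, ⟨e, he, rfl⟩, hl⟩
    · rintro ⟨he', _, ⟨e, he, rfl⟩, hl⟩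
      exact ⟨⟨e', he'⟩, ⟨e, he, hl⟩, rfl⟩

end SimpleGraph

theorem stmt9_general {V : Type*} [Fintype V]
    (T T' : SimpleGraph V) (hT : T.IsTree) (hT' : T'.IsTree) :
    ∃ τ : T.edgeSet ≃ T'.edgeSet,
      ∀ (e : T.edgeSet) (h l : V), (τ e : Sym2 V) = s(h, l) →
        ∀ p : T.Walk h l, p.IsPath → (e : Sym2 V) ∈ p.edges := by
  obtain ⟨f, hf, hfT⟩ := hT.exists_injective_liesOnPath hT'
  have hcard : Nat.card T'.edgeSet ≤ Nat.card T.edgeSet := by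
    simp only [Nat.card_coe_set_eq]
    have := hT.ncard_edgeSet_add_one
    have := hT'.ncard_edgeSet_add_one
    omega
  exact ⟨Equiv.ofBijective f (hf.bijective_of_nat_card_le hcard), hfT⟩

theorem stmt9 {V : Type*} [Fintype V] [DecidableEq V]
    (T T' : SimpleGraph V) (hT : T.IsTree) (hT' : T'.IsTree) :
    ∃ τ : T.edgeSet ≃ T'.edgeSet,
      ∀ (e : T.edgeSet) (h l : V), (τ e : Sym2 V) = s(h, l) →
        ∀ p : T.Walk h l, p.IsPath → (e : Sym2 V) ∈ p.edges :=
  stmt9_general T T' hT hT'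
end
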